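/- Define layer stresses for 1 ≤ α ≤ N by h_α Σ_{xx,α} = 2μ ( h_α ∂_x u_α − ( ∂_x z_{α+1/2} · (u_{α+1} − u_α)/2 + ∂_x z_{α−1/2} · (u_α − u_{α−1})/2 ) ) and h_α Σ_{zx,α} = μ ( h_α ∂_x w_α + h_α ∂_x z_α ∂_x u_α + ((u_{α+1} − u_α)/2)(1 − (∂_x z_{α+1/2})²) + ((u_α − u_{α−1})/2)(1 − (∂_x z_{α−1/2})²) ), and interface stresses by the centered averages Σ_{ab,α+1/2} = ( Σ_{ab,α+1} + Σ_{ab,α} )/2. Then the dissipation functional R_E = − Σ_{α=1}^N [ 2 ∂_x u_α · h_α Σ_{xx,α} − 2 Σ_{xx,α+1/2} (u_{α+1} − u_α) ∂_x z_{α+1/2} + ( ∂_x w_α + ∂_x z_α ∂_x u_α ) h_α Σ_{zx,α} + Σ_{zx,α+1/2} (u_{α+1} − u_α)(1 − (∂_x z_{α+1/2})²) ] − (κ/c_b³) u_1² equals − Σ_{α=1}^N ( h_α/μ )( Σ_{xx,α}² + Σ_{zx,α}² ) − (κ/c_b³) u_1², and hence R_E ≤ 0 when μ > 0, κ ≥ 0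 and H > 0. -/

import Mathlib

/-- ∂/∂x of a function of (x,t). -/
noncomputable def pdx (f : ℝ → ℝ → ℝ) (x t : ℝ) : ℝ := deriv (fun x' => f x' t) x

/-- Interface heights `z_{α+1/2} = z_b + Σ_{j=1}^α l_j H`. -/
noncomputable def zhalf (zb : ℝ → ℝ) (H : ℝ → ℝ → ℝ) (l : ℕ → ℝ) (α : ℕ) (x t : ℝ) : ℝ :=
  zb x + ∑ j ∈ Finset.Icc 1 α, l j * H x t

/-- Layer midpoints `z_α = (z_{α+1/2} + z_{α−1/2})/2`. -/
noncomputable def zc (zb : ℝ → ℝ) (H : ℝ → ℝ → ℝ) (l : ℕ → ℝ) (α : ℕ) (x t : ℝ) : ℝ :=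
  (zhalf zb H l α x t + zhalf zb H l (α - 1) x t) / 2

/-- `c_b = 1/√(1+(∂_x z_b)²)`. -/
noncomputable def cbf (zb : ℝ → ℝ) (x : ℝ) : ℝ := 1 / Real.sqrt (1 + (deriv zb x) ^ 2)

/-! The layer stress laws express `h_α ∂_x u_α` and `h_α (∂_x w_α + ∂_x z_α ∂_x u_α)` through
`Σ_{xx,α}`, `Σ_{zx,α}` and the velocity jumps at the two interfaces of the layer. Substituting them
turns the work of layer `α` into `(h_α/μ)(Σ_{xx,α}² + Σ_{zx,α}²)` plus the difference of an
interface flux between its lower and upper interface. Summed over the layers these differences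
telescope, and both boundary fluxes vanish because the velocity jump is zero at the bottom and at
the free surface. -/

open Finset

/-- The flux through interface `α + 1/2`, with velocity jump `du = u_{α+1} − u_α`, slope
`s = ∂_x z_{α+1/2}` and the stresses `Sxx`, `Szx` of the layer above it. -/
noncomputable def interfaceFlux (Sxx Szx s du : ℝ) : ℝ :=
  Sxx * s * du - Szx / 2 * du * (1 - s ^ 2)

@[simp]
lemma interfaceFlux_zero_jump (Sxx Szx s : ℝ) : interfaceFlux Sxx Szx s 0 = 0 := by
  simp [interfaceFlux]

lemma layer_work_eq {μ h ux wx zx Sxx Szx SxxUp SzxUp s du sLow duLow : ℝ} (hμ : μ ≠ 0)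
    (hxx : h * Sxx = 2 * μ * (h * ux - (s * du / 2 + sLow * duLow / 2)))
    (hzx : h * Szx = μ * (h * wx + h * zx * ux + du / 2 * (1 - s ^ 2)
      + duLow / 2 * (1 - sLow ^ 2))) :
    2 * ux * (h * Sxx) - 2 * ((SxxUp + Sxx) / 2) * du * s + (wx + zx * ux) * (h * Szx)
        + (SzxUp + Szx) / 2 * du * (1 - s ^ 2)
      = h / μ * (Sxx ^ 2 + Szx ^ 2)
        + (interfaceFlux Sxx Szx sLow duLow - interfaceFlux SxxUp SzxUp s du) := by
  unfold interfaceFlux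
  field_simp
  linear_combination (-2 * Sxx) * hxx + (-2 * Szx) * hzx

lemma sum_Icc_sub_telescope {M : Type*} [AddCommGroup M] (f : ℕ → M) (n : ℕ) :
    ∑ i ∈ Icc 1 n, (f (i - 1) - f i) = f 0 - f n := by
  induction n with
  | zero => simp
  | succ n ih => rw [sum_Icc_succ_top (by omega), ih, Nat.add_sub_cancel]; abel

lemma sum_layer_work_eq {N : ℕ} {μ : ℝ} (hμ : μ ≠ 0)
    {h ux wx zx Sxx Szx SxxI SzxI s u : ℕ → ℝ} (hu0 : u 0 = u 1) (huN : u (N + 1) = u N)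
    (hxx : ∀ α ∈ Icc 1 N, h α * Sxx α = 2 * μ * (h α * ux α
      - (s α * (u (α + 1) - u α) / 2 + s (α - 1) * (u α - u (α - 1)) / 2)))
    (hzx : ∀ α ∈ Icc 1 N, h α * Szx α = μ * (h α * wx α + h α * zx α * ux α
      + (u (α + 1) - u α) / 2 * (1 - s α ^ 2) + (u α - u (α - 1)) / 2 * (1 - s (α - 1) ^ 2)))
    (hSxxI : ∀ α ∈ Icc 0 N, SxxI α = (Sxx (α + 1) + Sxx α) / 2)
    (hSzxI : ∀ α ∈ Icc 0 N, SzxI α = (Szx (α + 1) + Szx α) / 2) :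
    ∑ α ∈ Icc 1 N, (2 * ux α * (h α * Sxx α) - 2 * SxxI α * (u (α + 1) - u α) * s α
        + (wx α + zx α * ux α) * (h α * Szx α) + SzxI α * (u (α + 1) - u α) * (1 - s α ^ 2))
      = ∑ α ∈ Icc 1 N, h α / μ * (Sxx α ^ 2 + Szx α ^ 2) := by
  set flux : ℕ → ℝ := fun β => interfaceFlux (Sxx (β + 1)) (Szx (β + 1)) (s β) (u (β + 1) - u β)
    with hflux
  have hlayer : ∀ α ∈ Icc 1 N,
      2 * ux α * (h α * Sxx α) - 2 * SxxI α * (u (α + 1) - u α) * s α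
          + (wx α + zx α * ux α) * (h α * Szx α) + SzxI α * (u (α + 1) - u α) * (1 - s α ^ 2)
        = h α / μ * (Sxx α ^ 2 + Szx α ^ 2) + (flux (α - 1) - flux α) := by
    intro α hα
    have hα0 : α ∈ Icc 0 N := Icc_subset_Icc_left (Nat.zero_le 1) hα
    have hαpos : α - 1 + 1 = α := Nat.sub_add_cancel (mem_Icc.mp hα).1
    rw [hSxxI α hα0, hSzxI α hα0, hflux]
    simp only [hαpos]
    exact layer_work_eq hμ (hxx α hα) (hzx α hα)
  rw [sum_congr rfl hlayer, sum_add_distrib, sum_Icc_sub_telescope]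
  simp [hflux, hu0, huN]

theorem stmt17_general (N : ℕ) (l : ℕ → ℝ)
    (hl : ∀ j ∈ Finset.Icc 1 N, 0 < l j)
    (μ κ : ℝ) (hμ : 0 < μ) (hκ : 0 ≤ κ)
    (zb : ℝ → ℝ) (H : ℝ → ℝ → ℝ)
    (hHpos : ∀ x t : ℝ, 0 < H x t)
    (u w : ℕ → ℝ → ℝ → ℝ)
    -- boundary conventions
    (hu0 : u 0 = u 1) (huN : u (N + 1) = u N)
    -- layer stresses
    (Sxxl Szxl : ℕ → ℝ → ℝ → ℝ)
    (hSxxl : ∀ α ∈ Finset.Icc 1 N, ∀ x t : ℝ,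
      l α * H x t * Sxxl α x t
        = 2 * μ * (l α * H x t * pdx (u α) x t
            - (pdx (zhalf zb H l α) x t * (u (α + 1) x t - u α x t) / 2
              + pdx (zhalf zb H l (α - 1)) x t * (u α x t - u (α - 1) x t) / 2)))
    (hSzxl : ∀ α ∈ Finset.Icc 1 N, ∀ x t : ℝ,
      l α * H x t * Szxl α x t
        = μ * (l α * H x t * pdx (w α) x t
            + l α * H x t * pdx (zc zb H l α) x t * pdx (u α) x t
            + (u (α + 1) x t - u α x t) / 2 * (1 - (pdx (zhalf zb H l α) x t) ^ 2)
            + (u α x t - u (α - 1) x t) / 2 * (1 - (pdx (zhalf zb H l (α - 1)) x t) ^ 2)))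
    -- interface stresses: centred averages of the layer stresses
    (Sxxh Szxh : ℕ → ℝ → ℝ → ℝ)
    (hSxxh : ∀ α ∈ Finset.Icc 0 N, ∀ x t : ℝ,
      Sxxh α x t = (Sxxl (α + 1) x t + Sxxl α x t) / 2)
    (hSzxh : ∀ α ∈ Finset.Icc 0 N, ∀ x t : ℝ,
      Szxh α x t = (Szxl (α + 1) x t + Szxl α x t) / 2) :
    ∀ x t : ℝ,
      (-(∑ α ∈ Finset.Icc 1 N,
            (2 * pdx (u α) x t * (l α * H x t * Sxxl α x t)
              - 2 * Sxxh α x t * (u (α + 1) x t - u α x t) * pdx (zhalf zb H l α) x t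
              + (pdx (w α) x t + pdx (zc zb H l α) x t * pdx (u α) x t)
                  * (l α * H x t * Szxl α x t)
              + Szxh α x t * (u (α + 1) x t - u α x t)
                  * (1 - (pdx (zhalf zb H l α) x t) ^ 2)))
          - κ / (cbf zb x) ^ 3 * (u 1 x t) ^ 2
        = -(∑ α ∈ Finset.Icc 1 N,
              (l α * H x t / μ) * ((Sxxl α x t) ^ 2 + (Szxl α x t) ^ 2))
          - κ / (cbf zb x) ^ 3 * (u 1 x t) ^ 2)
      ∧ (-(∑ α ∈ Finset.Icc 1 N,
            (2 * pdx (u α) x t * (l α * H x t * Sxxl α x t)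
              - 2 * Sxxh α x t * (u (α + 1) x t - u α x t) * pdx (zhalf zb H l α) x t
              + (pdx (w α) x t + pdx (zc zb H l α) x t * pdx (u α) x t)
                  * (l α * H x t * Szxl α x t)
              + Szxh α x t * (u (α + 1) x t - u α x t)
                  * (1 - (pdx (zhalf zb H l α) x t) ^ 2)))
          - κ / (cbf zb x) ^ 3 * (u 1 x t) ^ 2 ≤ 0) := by
  intro x t
  have hbalance := sum_layer_work_eq (N := N) hμ.ne' (h := fun α => l α * H x t)
    (u := fun α => u α x t) (s := fun α => pdx (zhalf zb H l α) x t)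
    (zx := fun α => pdx (zc zb H l α) x t) (by simp [hu0]) (by simp [huN])
    (fun α hα => hSxxl α hα x t) (fun α hα => hSzxl α hα x t)
    (fun α hα => hSxxh α hα x t) (fun α hα => hSzxh α hα x t)
  beta_reduce at hbalance
  have hviscous : 0 ≤ ∑ α ∈ Icc 1 N, l α * H x t / μ * ((Sxxl α x t) ^ 2 + (Szxl α x t) ^ 2) :=
    sum_nonneg fun α hα => by have := hl α hα; have := hHpos x t; positivity
  have hfriction : 0 ≤ κ / (cbf zb x) ^ 3 * (u 1 x t) ^ 2 := by unfold cbf; positivity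
  exact ⟨by rw [hbalance], by rw [hbalance]; linarith⟩

/-- with layer stresses defined through
`h_α Σ_{xx,α} = 2μ( h_α ∂_x u_α − ( ∂_x z_{α+1/2}(u_{α+1}−u_α)/2 + ∂_x z_{α−1/2}(u_α−u_{α−1})/2 ))`,
`h_α Σ_{zx,α} = μ( h_α ∂_x w_α + h_α ∂_x z_α ∂_x u_α + ((u_{α+1}−u_α)/2)(1−(∂_x z_{α+1/2})²) + ((u_α−u_{α−1})/2)(1−(∂_x z_{α−1/2})²))`,
and interface stresses given by centred averages, the dissipation `R_E` equals
`−Σ_{α=1}^N (h_α/μ)(Σ_{xx,α}² + Σ_{zx,α}²) − (κ/c_b³)u_1² ≤ 0`. -/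
theorem stmt17 (N : ℕ) (hN : 1 ≤ N) (l : ℕ → ℝ)
    (hl : ∀ j ∈ Finset.Icc 1 N, 0 < l j) (hlsum : ∑ j ∈ Finset.Icc 1 N, l j = 1)
    (μ κ : ℝ) (hμ : 0 < μ) (hκ : 0 ≤ κ)
    (zb : ℝ → ℝ) (H : ℝ → ℝ → ℝ)
    (hzb : ContDiff ℝ (⊤ : ℕ∞) zb)
    (hH : ContDiff ℝ (⊤ : ℕ∞) (fun q : ℝ × ℝ => H q.1 q.2))
    (hHpos : ∀ x t : ℝ, 0 < H x t)
    (u w : ℕ → ℝ → ℝ → ℝ)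
    (hu : ∀ α, ContDiff ℝ (⊤ : ℕ∞) (fun q : ℝ × ℝ => u α q.1 q.2))
    (hw : ∀ α, ContDiff ℝ (⊤ : ℕ∞) (fun q : ℝ × ℝ => w α q.1 q.2))
    -- boundary conventions
    (hu0 : u 0 = u 1) (huN : u (N + 1) = u N)
    -- layer stresses
    (Sxxl Szxl : ℕ → ℝ → ℝ → ℝ)
    (hSxxl : ∀ α ∈ Finset.Icc 1 N, ∀ x t : ℝ,
      l α * H x t * Sxxl α x t
        = 2 * μ * (l α * H x t * pdx (u α) x t
            - (pdx (zhalf zb H l α) x t * (u (α + 1) x t - u α x t) / 2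
              + pdx (zhalf zb H l (α - 1)) x t * (u α x t - u (α - 1) x t) / 2)))
    (hSzxl : ∀ α ∈ Finset.Icc 1 N, ∀ x t : ℝ,
      l α * H x t * Szxl α x t
        = μ * (l α * H x t * pdx (w α) x t
            + l α * H x t * pdx (zc zb H l α) x t * pdx (u α) x t
            + (u (α + 1) x t - u α x t) / 2 * (1 - (pdx (zhalf zb H l α) x t) ^ 2)
            + (u α x t - u (α - 1) x t) / 2 * (1 - (pdx (zhalf zb H l (α - 1)) x t) ^ 2)))
    -- conventions Σ_{ab,0} = Σ_{ab,1} and Σ_{ab,N+1} = Σ_{ab,N}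
    (hSxxl0 : Sxxl 0 = Sxxl 1) (hSxxlN : Sxxl (N + 1) = Sxxl N)
    (hSzxl0 : Szxl 0 = Szxl 1) (hSzxlN : Szxl (N + 1) = Szxl N)
    -- interface stresses: centred averages of the layer stresses
    (Sxxh Szxh : ℕ → ℝ → ℝ → ℝ)
    (hSxxh : ∀ α ∈ Finset.Icc 0 N, ∀ x t : ℝ,
      Sxxh α x t = (Sxxl (α + 1) x t + Sxxl α x t) / 2)
    (hSzxh : ∀ α ∈ Finset.Icc 0 N, ∀ x t : ℝ,
      Szxh α x t = (Szxl (α + 1) x t + Szxl α x t) / 2) :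
    ∀ x t : ℝ,
      (-(∑ α ∈ Finset.Icc 1 N,
            (2 * pdx (u α) x t * (l α * H x t * Sxxl α x t)
              - 2 * Sxxh α x t * (u (α + 1) x t - u α x t) * pdx (zhalf zb H l α) x t
              + (pdx (w α) x t + pdx (zc zb H l α) x t * pdx (u α) x t)
                  * (l α * H x t * Szxl α x t)
              + Szxh α x t * (u (α + 1) x t - u α x t)
                  * (1 - (pdx (zhalf zb H l α) x t) ^ 2)))
          - κ / (cbf zb x) ^ 3 * (u 1 x t) ^ 2
        = -(∑ α ∈ Finset.Icc 1 N,
              (l α * H x t / μ) * ((Sxxl α x t) ^ 2 + (Szxl α x t) ^ 2))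
          - κ / (cbf zb x) ^ 3 * (u 1 x t) ^ 2)
      ∧ (-(∑ α ∈ Finset.Icc 1 N,
            (2 * pdx (u α) x t * (l α * H x t * Sxxl α x t)
              - 2 * Sxxh α x t * (u (α + 1) x t - u α x t) * pdx (zhalf zb H l α) x t
              + (pdx (w α) x t + pdx (zc zb H l α) x t * pdx (u α) x t)
                  * (l α * H x t * Szxl α x t)
              + Szxh α x t * (u (α + 1) x t - u α x t)
                  * (1 - (pdx (zhalf zb H l α) x t) ^ 2)))
          - κ / (cbf zb x) ^ 3 * (u 1 x t) ^ 2 ≤ 0) :=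
  stmt17_general N l hl μ κ hμ hκ zb H hHpos u w hu0 huN Sxxl Szxl hSxxl hSzxl Sxxh Szxh hSxxh hSzxh
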